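/- arXiv:1502.07730 — 7 statements merged into one kernel-verified Lean document; each statement's English description precedes it below -/
import Mathlib

section
/- Let n be a positive integer and let w_1 ≤ w_2 ≤ … ≤ w_m be a weighing sequence for n, with partial sums R_i = w_1 + … + w_i and R_0 = 0. Then for every i with 1 ≤ i ≤ m, one has w_i ≤ 2·R_{i−1} + 1. -/
/-- `w 0, w 1, …, w (m-1)` (1-indexed as `w_1 ≤ … ≤ w_m` in the paper) is a
weighing sequence for `n`: a nondecreasing list of `m` positive integers summing
to `n` such that every integer `1 ≤ k ≤ n` can be written as
`k = u_1 w_1 + … + u_m w_m` with each `u_i ∈ {-1, 0, 1}`. -/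
def IsWeighingSeq (n m : ℕ) (w : ℕ → ℕ) : Prop :=
  (∀ i, i < m → 0 < w i) ∧
  (∀ i j, i ≤ j → j < m → w i ≤ w j) ∧
  (∑ i ∈ Finset.range m, w i) = n ∧
  ∀ k : ℤ, 1 ≤ k → k ≤ (n : ℤ) →
    ∃ u : ℕ → ℤ, (∀ i, u i = -1 ∨ u i = 0 ∨ u i = 1) ∧
      k = ∑ i ∈ Finset.range m, u i * (w i : ℤ)

/-!
If `w_i ≥ 2 R_{i-1} + 2`, weigh `k = W - R_{i-1} - 1`, where `W = w_i + … + w_m`. The weights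
before `i` contribute at most `R_{i-1}` in absolute value, so the weights from `i` on must
contribute at least `W - 2 R_{i-1} - 1`, yet strictly less than `W`. Hence one of them has
coefficient `0` or `-1`, which costs at least `w_i ≥ 2 R_{i-1} + 2`: a contradiction.
-/

open Finset

section SignedSums

variable {ι R : Type*} [CommRing R] [LinearOrder R] [IsStrictOrderedRing R]
  {s : Finset ι} {u w : ι → R}

theorem abs_sum_mul_le_sum (hu : ∀ j ∈ s, |u j| ≤ 1) (hw : ∀ j ∈ s, 0 ≤ w j) :
    |∑ j ∈ s, u j * w j| ≤ ∑ j ∈ s, w j := by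
  refine (abs_sum_le_sum_abs _ _).trans (sum_le_sum fun j hj => ?_)
  rw [abs_mul, abs_of_nonneg (hw j hj)]
  exact mul_le_of_le_one_left (hw j hj) (hu j hj)

theorem sum_mul_le_sum_sub (hu : ∀ j ∈ s, u j ≤ 1) (hw : ∀ j ∈ s, 0 ≤ w j)
    {j₀ : ι} (hj₀ : j₀ ∈ s) (hu₀ : u j₀ ≤ 0) :
    ∑ j ∈ s, u j * w j ≤ ∑ j ∈ s, w j - w j₀ := by
  have hdefect : (1 - u j₀) * w j₀ ≤ ∑ j ∈ s, (1 - u j) * w j :=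
    single_le_sum (f := fun j => (1 - u j) * w j)
      (fun j hj => mul_nonneg (sub_nonneg.2 (hu j hj)) (hw j hj)) hj₀
  simp only [sub_mul, one_mul, sum_sub_distrib] at hdefect
  linarith [mul_nonpos_of_nonpos_of_nonneg hu₀ (hw j₀ hj₀)]

end SignedSums

theorem exists_sum_mul_le_sum_sub {ι : Type*} {s : Finset ι} {u w : ι → ℤ}
    (hu : ∀ j ∈ s, u j = -1 ∨ u j = 0 ∨ u j = 1) (hw : ∀ j ∈ s, 0 ≤ w j)
    (hlt : ∑ j ∈ s, u j * w j < ∑ j ∈ s, w j) :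
    ∃ k ∈ s, ∑ j ∈ s, u j * w j ≤ ∑ j ∈ s, w j - w k := by
  obtain ⟨j₀, hj₀, hne⟩ : ∃ j ∈ s, u j ≠ 1 := by
    by_contra! hall
    exact hlt.ne (sum_congr rfl fun j hj => by rw [hall j hj, one_mul])
  refine ⟨j₀, hj₀, sum_mul_le_sum_sub (fun j hj => ?_) hw hj₀ ?_⟩
  · rcases hu j hj with h | h | h <;> simp [h]
  · rcases hu j₀ hj₀ with h | h | h <;> simp_all

theorem part_le_two_mul_prev_partial_sum_add_one_general (n m : ℕ) (w : ℕ → ℕ)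
    (hw : IsWeighingSeq n m w) (i : ℕ) (hi : i < m) :
    w i ≤ 2 * (∑ j ∈ Finset.range i, w j) + 1 := by
  obtain ⟨-, hmono, hsum, hrep⟩ := hw
  by_contra! hlarge
  set R : ℤ := ∑ j ∈ range i, (w j : ℤ)
  set W : ℤ := ∑ j ∈ Ico i m, (w j : ℤ)
  have hwi_large : 2 * R + 2 ≤ w i := by
    have : 2 * ∑ j ∈ range i, w j + 2 ≤ w i := hlarge
    simp only [R]; exact_mod_cast this
  have htotal : (n : ℤ) = R + W := by
    rw [← hsum, Nat.cast_sum, sum_range_add_sum_Ico _ hi.le]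
  have hR : 0 ≤ R := by positivity
  have hwi : (w i : ℤ) ≤ W :=
    single_le_sum (f := fun j => (w j : ℤ)) (fun _ _ => by positivity) (by simp [hi])
  obtain ⟨u, hu, hk⟩ := hrep (W - R - 1) (by linarith) (by linarith)
  rw [← sum_range_add_sum_Ico _ hi.le] at hk
  have hhead := abs_le.1 <| abs_sum_mul_le_sum (s := range i) (u := u) (w := fun j => (w j : ℤ))
    (fun j _ => by rcases hu j with h | h | h <;> simp [h]) (fun _ _ => by positivity)
  obtain ⟨j, hj, htail⟩ := exists_sum_mul_le_sum_sub (s := Ico i m) (w := fun j => (w j : ℤ))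
    (fun j _ => hu j) (fun _ _ => by positivity) (by linarith)
  have hij : (w i : ℤ) ≤ w j := by
    exact_mod_cast hmono i j (mem_Ico.1 hj).1 (mem_Ico.1 hj).2
  linarith

/-- For any weighing sequence, `w_i ≤ 2 * R_{i-1} + 1` where
`R_{i-1} = w_1 + … + w_{i-1}` (here `i` is 0-indexed, so `R_{i-1}` is the sum
over `Finset.range i`). -/
theorem part_le_two_mul_prev_partial_sum_add_one (n m : ℕ) (w : ℕ → ℕ)
    (hn : 0 < n) (hw : IsWeighingSeq n m w) (i : ℕ) (hi : i < m) :
    w i ≤ 2 * (∑ j ∈ Finset.range i, w j) + 1 :=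
  part_le_two_mul_prev_partial_sum_add_one_general n m w hw i hi
end

section
/- Let n be a positive integer and let w_1 ≤ w_2 ≤ … ≤ w_m be a weighing sequence for n, with partial sums R_i = w_1 + … + w_i and R_0 = 0. Then for every i with 1 ≤ i ≤ m, one has R_i ≤ 3·R_{i−1} + 1. -/
open Finset

section SignedSum

variable {ι α : Type*} [CommRing α] [LinearOrder α] [IsStrictOrderedRing α]
  {s : Finset ι} {u w : ι → α}

lemma abs_sum_signed_le_sum (hu : ∀ j ∈ s, u j = -1 ∨ u j = 0 ∨ u j = 1)
    (hw : ∀ j ∈ s, 0 ≤ w j) : |∑ j ∈ s, u j * w j| ≤ ∑ j ∈ s, w j := by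
  refine (abs_sum_le_sum_abs _ _).trans (sum_le_sum fun j hj => ?_)
  rcases hu j hj with h | h | h <;> simp [h, abs_of_nonneg (hw j hj), hw j hj]

lemma sum_signed_add_le_sum_of_lt {c : α} (hu : ∀ j ∈ s, u j = -1 ∨ u j = 0 ∨ u j = 1)
    (hc : 0 ≤ c) (hw : ∀ j ∈ s, c ≤ w j) (hlt : ∑ j ∈ s, u j * w j < ∑ j ∈ s, w j) :
    ∑ j ∈ s, u j * w j + c ≤ ∑ j ∈ s, w j := by
  obtain ⟨j, hj, huj⟩ : ∃ j ∈ s, u j ≠ 1 := by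
    by_contra! h
    exact hlt.ne (sum_congr rfl fun j hj => by rw [h j hj, one_mul])
  have hdefect : ∀ j ∈ s, 0 ≤ w j - u j * w j := fun j hj => by
    rcases hu j hj with h | h | h <;> rw [h] <;> linarith [hw j hj]
  have hj_defect : c ≤ w j - u j * w j := by
    rcases hu j hj with h | h | h
    · rw [h]; linarith [hw j hj]
    · rw [h]; linarith [hw j hj]
    · exact absurd h huj
  have hgap := single_le_sum hdefect hj
  rw [sum_sub_distrib] at hgap
  linarith

end SignedSum

namespace IsWeighingSeq

variable {n m : ℕ} {w : ℕ → ℕ}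

lemma le_two_mul_sum_range_add_one (hw : IsWeighingSeq n m w) {i : ℕ} (hi : i < m) :
    w i ≤ 2 * ∑ j ∈ range i, w j + 1 := by
  obtain ⟨-, hmono, hsum, hrep⟩ := hw
  by_contra! hbig
  set R := ∑ j ∈ range i, w j
  set M := ∑ j ∈ Ico i m, w j
  have hn : n = R + M := by rw [← hsum, sum_range_add_sum_Ico _ hi.le]
  have hwiM : w i ≤ M := single_le_sum (fun j _ => Nat.zero_le (w j)) (mem_Ico.2 ⟨le_rfl, hi⟩)
  obtain ⟨u, hu, hk⟩ := hrep ((n : ℤ) - 2 * R - 1) (by omega) (by omega)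
  rw [← sum_range_add_sum_Ico _ hi.le] at hk
  set A := ∑ j ∈ range i, u j * (w j : ℤ)
  set B := ∑ j ∈ Ico i m, u j * (w j : ℤ)
  have hA : |A| ≤ R := by
    simpa [R] using abs_sum_signed_le_sum (s := range i) (fun j _ => hu j)
      (fun j _ => Int.natCast_nonneg (w j))
  have hBM : B < M := by
    have hRA : -(R : ℤ) ≤ A := neg_le_of_abs_le hA
    omega
  have hB : B + w i ≤ M := by
    simpa [M] using sum_signed_add_le_sum_of_lt (s := Ico i m) (fun j _ => hu j)
      (Int.natCast_nonneg (w i)) (fun j hj => mod_cast hmono i j (mem_Ico.1 hj).1 (mem_Ico.1 hj).2)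
      (by simpa [M] using hBM)
  have hAR : A ≤ R := le_of_abs_le hA
  omega

end IsWeighingSeq

theorem partial_sum_le_three_mul_prev_add_one_general (n m : ℕ) (w : ℕ → ℕ)
    (hw : IsWeighingSeq n m w) (i : ℕ) (hi : i < m) :
    (∑ j ∈ Finset.range (i + 1), w j) ≤ 3 * (∑ j ∈ Finset.range i, w j) + 1 := by
  rw [sum_range_succ]
  linarith [hw.le_two_mul_sum_range_add_one hi]

/-- For any weighing sequence, `R_i ≤ 3 * R_{i-1} + 1` (here `i` is 0-indexed:
`R_i` is the sum over `Finset.range (i+1)` and `R_{i-1}` over `Finset.range i`). -/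
theorem partial_sum_le_three_mul_prev_add_one (n m : ℕ) (w : ℕ → ℕ)
    (hn : 0 < n) (hw : IsWeighingSeq n m w) (i : ℕ) (hi : i < m) :
    (∑ j ∈ Finset.range (i + 1), w j) ≤ 3 * (∑ j ∈ Finset.range i, w j) + 1 :=
  partial_sum_le_three_mul_prev_add_one_general n m w hw i hi
end

section
/- Let n be a positive integer and let w_1 ≤ w_2 ≤ … ≤ w_m be a weighing sequence for n. Then for every i with 1 ≤ i ≤ m, the i-th part satisfies w_i ≤ 3^{i−1}. -/
open Finset

theorem IsWeighingSeq.le_two_mul_sum_add_one {n m : ℕ} {w : ℕ → ℕ} (hw : IsWeighingSeq n m w)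
    {i : ℕ} (hi : i < m) : w i ≤ 2 * ∑ j ∈ range i, w j + 1 := by
  obtain ⟨hpos, hmono, hsum, hrep⟩ := hw
  have hwi_pos := hpos i hi
  have hwi_le : w i ≤ n := hsum ▸ single_le_sum (fun j _ => Nat.zero_le (w j)) (mem_range.2 hi)
  obtain ⟨u, hu, hk⟩ := hrep (n - w i + 1) (by omega) (by omega)
  set d : ℕ → ℤ := fun j => (1 - u j) * w j with hd
  have hd_nonneg : ∀ j, 0 ≤ d j := fun j => by
    rcases hu j with h | h | h <;> simp [hd, h]
  have hd_sum : ∑ j ∈ range m, d j = w i - 1 := by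
    have hn : (n : ℤ) = ∑ j ∈ range m, (w j : ℤ) := by rw [← hsum]; push_cast; rfl
    simp only [hd, sub_mul, one_mul, sum_sub_distrib]
    linarith
  have hd_tail : ∀ j ∈ Ico i m, d j = 0 := by
    intro j hj
    obtain ⟨hij, hjm⟩ := mem_Ico.1 hj
    have hwij : (w i : ℤ) ≤ w j := by exact_mod_cast hmono i j hij hjm
    have hle : d j ≤ w i - 1 :=
      hd_sum ▸ single_le_sum (fun j _ => hd_nonneg j) (mem_range.2 hjm)
    rcases hu j with h | h | h <;> simp only [hd, h] at hle ⊢ <;> linarith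
  zify
  calc (w i : ℤ) = ∑ j ∈ range i, d j + 1 := by
        rw [← sum_range_add_sum_Ico d hi.le, sum_eq_zero hd_tail] at hd_sum
        linarith
    _ ≤ ∑ j ∈ range i, 2 * (w j : ℤ) + 1 := by
        gcongr with j
        rcases hu j with h | h | h <;> (simp only [hd, h]; omega)
    _ = 2 * ∑ j ∈ range i, (w j : ℤ) + 1 := by rw [mul_sum]

theorem two_mul_sum_range_add_one_le_three_pow {w : ℕ → ℕ} {i : ℕ}
    (h : ∀ j < i, w j ≤ 2 * ∑ l ∈ range j, w l + 1) :
    2 * ∑ l ∈ range i, w l + 1 ≤ 3 ^ i := by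
  induction i with
  | zero => simp
  | succ i ih =>
    have hprev := ih fun j hj => h j (by omega)
    have hlast := h i (by omega)
    rw [sum_range_succ, pow_succ]
    omega

theorem part_le_three_pow_general (n m : ℕ) (w : ℕ → ℕ)
    (hw : IsWeighingSeq n m w) (i : ℕ) (hi : i < m) :
    w i ≤ 3 ^ i :=
  (hw.le_two_mul_sum_add_one hi).trans <|
    two_mul_sum_range_add_one_le_three_pow fun _ hj => hw.le_two_mul_sum_add_one (hj.trans hi)

/-- For any weighing sequence, the `i`-th part satisfies `w_i ≤ 3 ^ (i - 1)`
(here `i` is 0-indexed, so the bound reads `w i ≤ 3 ^ i`). -/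
theorem part_le_three_pow (n m : ℕ) (w : ℕ → ℕ)
    (hn : 0 < n) (hw : IsWeighingSeq n m w) (i : ℕ) (hi : i < m) :
    w i ≤ 3 ^ i :=
  part_le_three_pow_general n m w hw i hi
end

section
/- Let n be a positive integer and let w_1 ≤ w_2 ≤ … ≤ w_m be a weighing sequence for n, with partial sums R_i = w_1 + … + w_i. Then for every i with 1 ≤ i ≤ m, one has R_i ≤ (3^i − 1)/2. In particular n = R_m ≤ (3^m − 1)/2, i.e., 2n ≤ 3^m − 1. -/
/-!
If `w_{j+1} > 2 R_j + 1`, weigh `k = n - (2 R_j + 1)`. Complementing its signs, `2 R_j + 1` becomes a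
combination `∑ (1 - u_i) w_i` with coefficients in `{0, 1, 2}`. Every weight from `w_{j+1}` on then exceeds
`2 R_j + 1`, so none of them can occur, and the first `j` weights contribute at most `2 R_j`.
Hence `w_{j+1} ≤ 2 R_j + 1`, i.e. `2 R_{j+1} + 1 ≤ 3 (2 R_j + 1)`, and induction gives `2 R_i + 1 ≤ 3 ^ i`.
-/

open Finset

lemma one_sub_mul_mem_Icc {u w : ℤ} (hu : u = -1 ∨ u = 0 ∨ u = 1) (hw : 0 ≤ w) :
    0 ≤ (1 - u) * w ∧ (1 - u) * w ≤ 2 * w := by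
  rcases hu with rfl | rfl | rfl <;> constructor <;> linarith

lemma one_sub_mul_eq_zero_of_lt {u w : ℤ} (hu : u = -1 ∨ u = 0 ∨ u = 1) (hw : 0 ≤ w)
    (hlt : (1 - u) * w < w) : (1 - u) * w = 0 := by
  rcases hu with rfl | rfl | rfl <;> linarith

namespace IsWeighingSeq

variable {n m : ℕ} {w : ℕ → ℕ}

lemma weight_le_two_mul_partial_sum_add_one (hw : IsWeighingSeq n m w) {j : ℕ} (hj : j < m) :
    w j ≤ 2 * ∑ i ∈ range j, w i + 1 := by
  obtain ⟨-, hmono, hsum, hrep⟩ := hw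
  by_contra! hlt
  set R := ∑ i ∈ range j, w i
  have hn : R + ∑ i ∈ Ico j m, w i = n := by rw [← hsum, sum_range_add_sum_Ico _ hj.le]
  have hwj_le : w j ≤ ∑ i ∈ Ico j m, w i :=
    single_le_sum (fun _ _ => Nat.zero_le _) (mem_Ico.mpr ⟨le_rfl, hj⟩)
  obtain ⟨u, hu, hk⟩ := hrep (n - (2 * R + 1)) (by omega) (by omega)
  set v : ℕ → ℤ := fun i => (1 - u i) * w i
  have hv i : 0 ≤ v i ∧ v i ≤ 2 * w i := one_sub_mul_mem_Icc (hu i) (Nat.cast_nonneg _)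
  have hcompl : (2 * R + 1 : ℤ) = ∑ i ∈ range j, v i + ∑ i ∈ Ico j m, v i := by
    rw [sum_range_add_sum_Ico _ hj.le]
    simp only [v, sub_mul, one_mul, sum_sub_distrib, ← hk, ← hsum]
    push_cast
    ring
  have hhead : ∑ i ∈ range j, v i ≤ 2 * R := by
    push_cast [R, mul_sum]
    exact sum_le_sum fun i _ => (hv i).2
  have hhead_nonneg : 0 ≤ ∑ i ∈ range j, v i := sum_nonneg fun i _ => (hv i).1
  have htail : ∑ i ∈ Ico j m, v i = 0 := by
    refine sum_eq_zero fun i hi => one_sub_mul_eq_zero_of_lt (hu i) (Nat.cast_nonneg _) ?_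
    have hvi : v i ≤ ∑ i ∈ Ico j m, v i := single_le_sum (fun t _ => (hv t).1) hi
    have hwi : (w j : ℤ) ≤ w i := by exact_mod_cast hmono j i (mem_Ico.mp hi).1 (mem_Ico.mp hi).2
    change v i < w i
    omega
  omega

lemma two_mul_partial_sum_add_one_le (hw : IsWeighingSeq n m w) {i : ℕ} (hi : i ≤ m) :
    2 * ∑ j ∈ range i, w j + 1 ≤ 3 ^ i := by
  induction i with
  | zero => simp
  | succ i ih =>
    have hstep := hw.weight_le_two_mul_partial_sum_add_one hi
    rw [sum_range_succ, pow_succ]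
    omega

end IsWeighingSeq

theorem partial_sum_le_and_two_mul_le_general (n m : ℕ) (w : ℕ → ℕ)
    (hw : IsWeighingSeq n m w) :
    (∀ i, 1 ≤ i → i ≤ m → 2 * (∑ j ∈ Finset.range i, w j) ≤ 3 ^ i - 1) ∧
      2 * n ≤ 3 ^ m - 1 := by
  refine ⟨fun i _ hi => ?_, ?_⟩
  · have := hw.two_mul_partial_sum_add_one_le hi
    omega
  · have := hw.two_mul_partial_sum_add_one_le le_rfl
    rw [hw.2.2.1] at this
    omega

/-- For any weighing sequence, `R_i ≤ (3 ^ i - 1) / 2` for every `1 ≤ i ≤ m`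
(stated as `2 * R_i ≤ 3 ^ i - 1`); in particular `2 * n ≤ 3 ^ m - 1`. -/
theorem partial_sum_le_and_two_mul_le (n m : ℕ) (w : ℕ → ℕ)
    (hn : 0 < n) (hw : IsWeighingSeq n m w) :
    (∀ i, 1 ≤ i → i ≤ m → 2 * (∑ j ∈ Finset.range i, w j) ≤ 3 ^ i - 1) ∧
      2 * n ≤ 3 ^ m - 1 :=
  partial_sum_le_and_two_mul_le_general n m w hw
end

section
/- For every positive integer m, the list 3^0, 3^1, …, 3^{m−1} is a weighing sequence for n = (3^m − 1)/2; that is, every integer k with 1 ≤ k ≤ (3^m − 1)/2 can be written as k = u_1·3^0 + u_2·3^1 + … + u_m·3^{m−1} with each u_i ∈ {−1, 0, 1}. -/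
/-! Balanced ternary: peel off the top digit greedily. If `2|k| ≤ 3^(m+1) - 1`, then subtracting
`c·3^m` for a suitable `c ∈ {-1, 0, 1}` leaves `k'` with `2|k'| ≤ 3^m - 1`, and induction on `m`
represents `k'` with the lower powers. The digit exists because `3^m` is odd: if `2|k| > 3^m - 1`
then `2|k| ≥ 3^m + 1`, so `c = sign k` brings `2|k'|` below `3^m - 1`. Since
`1 + 3 + … + 3^(m-1) = (3^m - 1)/2`, this covers every `1 ≤ k ≤ n`. -/

open Finset

lemma exists_top_digit {P k : ℤ} (hP : Odd P) (h₁ : -(3 * P - 1) ≤ 2 * k)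
    (h₂ : 2 * k ≤ 3 * P - 1) :
    ∃ c : ℤ, (c = -1 ∨ c = 0 ∨ c = 1) ∧ -(P - 1) ≤ 2 * (k - c * P) ∧ 2 * (k - c * P) ≤ P - 1 := by
  obtain ⟨r, rfl⟩ := hP
  by_cases hlo : 2 * k < -(2 * r)
  · exact ⟨-1, by omega⟩
  by_cases hhi : 2 * r < 2 * k
  · exact ⟨1, by omega⟩
  exact ⟨0, by omega⟩

theorem exists_balanced_ternary (m : ℕ) {k : ℤ} (h₁ : -(3 ^ m - 1) ≤ 2 * k)
    (h₂ : 2 * k ≤ 3 ^ m - 1) :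
    ∃ u : ℕ → ℤ, (∀ i, u i = -1 ∨ u i = 0 ∨ u i = 1) ∧ k = ∑ i ∈ range m, u i * 3 ^ i := by
  induction m generalizing k with
  | zero => exact ⟨0, by simp, by norm_num at h₁ h₂ ⊢; omega⟩
  | succ m ih =>
    rw [pow_succ'] at h₁ h₂
    obtain ⟨c, hc, hk'₁, hk'₂⟩ := exists_top_digit (Odd.pow (by decide)) h₁ h₂
    obtain ⟨u, hu, hk'⟩ := ih (k := k - c * 3 ^ m) hk'₁ hk'₂
    refine ⟨Function.update u m c, fun i => ?_, ?_⟩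
    · rcases eq_or_ne i m with rfl | hi
      · simpa using hc
      · simpa [hi] using hu i
    have hlow : ∑ i ∈ range m, Function.update u m c i * 3 ^ i = ∑ i ∈ range m, u i * 3 ^ i :=
      sum_congr rfl fun i hi => by rw [Function.update_of_ne (mem_range.1 hi).ne]
    rw [sum_range_succ, hlow, ← hk', Function.update_self]
    ring

theorem powers_of_three_isWeighingSeq_general (m : ℕ) :
    IsWeighingSeq ((3 ^ m - 1) / 2) m (fun i => 3 ^ i) := by
  have hsum : ∑ i ∈ range m, 3 ^ i = (3 ^ m - 1) / 2 := Nat.geomSum_eq (m := 3) (by norm_num) m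
  refine ⟨fun i _ => by positivity, fun i j hij _ => Nat.pow_le_pow_right (by norm_num) hij,
    hsum, fun k hk₁ hk₂ => ?_⟩
  have hpow : (1 : ℤ) ≤ 3 ^ m := one_le_pow₀ (by norm_num)
  have hn : 2 * (((3 ^ m - 1) / 2 : ℕ) : ℤ) ≤ 3 ^ m - 1 := by
    push_cast [Nat.one_le_pow m 3 (by norm_num)]
    omega
  obtain ⟨u, hu, hk⟩ := exists_balanced_ternary m (k := k) (by linarith) (by linarith)
  exact ⟨u, hu, by exact_mod_cast hk⟩

/-- For every positive `m`, the list `3^0, 3^1, …, 3^(m-1)` is a weighing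
sequence for `n = (3^m - 1) / 2`: every `1 ≤ k ≤ (3^m - 1)/2` is representable
as `k = u_1·3^0 + … + u_m·3^(m-1)` with `u_i ∈ {-1, 0, 1}`. -/
theorem powers_of_three_isWeighingSeq (m : ℕ) (hm : 0 < m) :
    IsWeighingSeq ((3 ^ m - 1) / 2) m (fun i => 3 ^ i) :=
  powers_of_three_isWeighingSeq_general m
end

section
/- Let m be a positive integer and let n be an integer with (3^{m−1} + 1)/2 ≤ n ≤ (3^m − 1)/2. Then every weighing sequence for n has at least m parts. -/
open Finset

def signedSums (w : ℕ → ℤ) (m : ℕ) : Finset ℤ :=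
  (Fintype.piFinset fun _ : Fin m => ({-1, 0, 1} : Finset ℤ)).image fun u => ∑ i : Fin m, u i * w i

namespace signedSums

variable {w : ℕ → ℤ} {m : ℕ}

theorem card_le : #(signedSums w m) ≤ 3 ^ m :=
  card_image_le.trans (by simp)

theorem mem_of_coeffs {k : ℤ} (u : ℕ → ℤ) (hu : ∀ i, u i = -1 ∨ u i = 0 ∨ u i = 1)
    (hk : k = ∑ i ∈ range m, u i * w i) : k ∈ signedSums w m := by
  refine mem_image.mpr ⟨fun i => u i, Fintype.mem_piFinset.mpr fun i => ?_, ?_⟩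
  · simpa using hu i
  · rw [hk, Fin.sum_univ_eq_sum_range (fun i => u i * w i)]

theorem zero_mem : (0 : ℤ) ∈ signedSums w m :=
  mem_of_coeffs 0 (fun _ => Or.inr (Or.inl rfl)) (by simp)

theorem neg_mem {k : ℤ} (hk : k ∈ signedSums w m) : -k ∈ signedSums w m := by
  obtain ⟨u, hu, rfl⟩ := mem_image.mp hk
  refine mem_image.mpr ⟨-u, Fintype.mem_piFinset.mpr fun i => ?_, by simp [neg_mul]⟩
  have hui := Fintype.mem_piFinset.mp hu i
  simp only [mem_insert, mem_singleton] at hui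
  rcases hui with h | h | h <;> simp [h]

end signedSums

theorem IsWeighingSeq.Icc_subset_signedSums {n m : ℕ} {w : ℕ → ℕ} (hw : IsWeighingSeq n m w) :
    Icc (-(n : ℤ)) n ⊆ signedSums (fun i => (w i : ℤ)) m := by
  have hpos : ∀ k : ℤ, 1 ≤ k → k ≤ n → k ∈ signedSums (fun i => (w i : ℤ)) m := fun k h1 h2 =>
    let ⟨u, hu, hk⟩ := hw.2.2.2 k h1 h2
    signedSums.mem_of_coeffs u hu hk
  intro k hk
  obtain ⟨hlo, hhi⟩ := mem_Icc.mp hk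
  rcases lt_trichotomy k 0 with hneg | rfl | hk0
  · simpa using signedSums.neg_mem (hpos (-k) (by omega) (by omega))
  · exact signedSums.zero_mem
  · exact hpos k hk0 hhi

theorem IsWeighingSeq.two_mul_add_one_le_three_pow {n m : ℕ} {w : ℕ → ℕ}
    (hw : IsWeighingSeq n m w) : 2 * n + 1 ≤ 3 ^ m := by
  have := (card_le_card hw.Icc_subset_signedSums).trans signedSums.card_le
  rwa [Int.card_Icc, show (n : ℤ) + 1 - -n = ((2 * n + 1 : ℕ) : ℤ) by push_cast; ring,
    Int.toNat_natCast] at this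

theorem length_ge_of_mem_range_general (m n : ℕ)
    (h1 : 3 ^ (m - 1) + 1 ≤ 2 * n) :
    ∀ (m' : ℕ) (w : ℕ → ℕ), IsWeighingSeq n m' w → m ≤ m' := by
  intro m' w hw
  have hpow : 3 ^ (m - 1) < 3 ^ m' := by
    have := hw.two_mul_add_one_le_three_pow
    omega
  have := (Nat.pow_lt_pow_iff_right (by norm_num : 1 < 3)).mp hpow
  omega

/-- If `(3^(m-1) + 1) / 2 ≤ n ≤ (3^m - 1) / 2` (stated doubled, exactly
equivalently, as `3^(m-1) + 1 ≤ 2n ≤ 3^m - 1`), then every weighing sequence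
for `n` has at least `m` parts. -/
theorem length_ge_of_mem_range (m n : ℕ) (hm : 0 < m)
    (h1 : 3 ^ (m - 1) + 1 ≤ 2 * n) (h2 : 2 * n ≤ 3 ^ m - 1) :
    ∀ (m' : ℕ) (w : ℕ → ℕ), IsWeighingSeq n m' w → m ≤ m' :=
  length_ge_of_mem_range_general m n h1
end

section
/- For every positive integer n, the minimal length of a weighing sequence for n (the common length of all feasible partitions of n) equals ⌈log_3(2n)⌉. -/
/-!
A signed sum of `m` weights takes at most `3 ^ m` values, while a weighing sequence for `n` must
produce every integer in `[-n, n]`; hence `2 * n < 3 ^ m`. Conversely, weights each at most one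
more than twice the sum of the earlier ones represent every integer up to their total, by choosing
the sign of the last weight greedily. Splitting `n` into `⌊(n + 1) / 3⌋` plus a last weight
`n - ⌊(n + 1) / 3⌋` keeps this condition and lowers `⌈log₃ (2 n)⌉` by one, which builds such a
sequence of the optimal length recursively.
-/

open Finset

def IsSignedSum (m : ℕ) (w : ℕ → ℕ) (k : ℤ) : Prop :=
  ∃ u : ℕ → ℤ, (∀ i, u i = -1 ∨ u i = 0 ∨ u i = 1) ∧ k = ∑ i ∈ range m, u i * (w i : ℤ)

namespace IsSignedSum

variable {m : ℕ} {w : ℕ → ℕ} {k : ℤ}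

theorem zero (m : ℕ) (w : ℕ → ℕ) : IsSignedSum m w 0 :=
  ⟨0, fun _ => Or.inr (Or.inl rfl), by simp⟩

theorem neg (h : IsSignedSum m w k) : IsSignedSum m w (-k) := by
  obtain ⟨u, hu, rfl⟩ := h
  refine ⟨-u, fun i => ?_, by simp [sum_neg_distrib]⟩
  rcases hu i with h | h | h <;> simp [h]

theorem add_mul_last (h : IsSignedSum m w k) {c : ℤ} (hc : c = -1 ∨ c = 0 ∨ c = 1) :
    IsSignedSum (m + 1) w (k + c * w m) := by
  obtain ⟨u, hu, rfl⟩ := h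
  refine ⟨Function.update u m c, fun i => ?_, ?_⟩
  · rcases eq_or_ne i m with rfl | hne
    · simpa using hc
    · simpa [Function.update_of_ne hne] using hu i
  · rw [sum_range_succ, Function.update_self]
    congr 1
    exact sum_congr rfl fun i hi => by
      rw [Function.update_of_ne (mem_range.1 hi).ne]

end IsSignedSum

theorem isSignedSum_of_abs_le {m : ℕ} {w : ℕ → ℕ}
    (hw : ∀ i < m, w i ≤ 2 * ∑ j ∈ range i, w j + 1) {k : ℤ}
    (hk : |k| ≤ ∑ i ∈ range m, (w i : ℤ)) : IsSignedSum m w k := by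
  induction m generalizing k with
  | zero =>
    obtain rfl : k = 0 := abs_nonpos_iff.1 (by simpa using hk)
    exact .zero 0 w
  | succ m ih =>
    set S := ∑ i ∈ range m, (w i : ℤ)
    have hS : 0 ≤ S := sum_nonneg fun _ _ => Int.natCast_nonneg _
    have hwm : (w m : ℤ) ≤ 2 * S + 1 := by
      simp only [S]
      exact_mod_cast hw m m.lt_succ_self
    rw [sum_range_succ, abs_le] at hk
    obtain ⟨c, hc, hkc⟩ : ∃ c : ℤ, (c = -1 ∨ c = 0 ∨ c = 1) ∧ |k - c * w m| ≤ S := by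
      rcases lt_or_ge S k with h₁ | h₁
      · exact ⟨1, by simp, abs_le.2 ⟨by linarith, by linarith⟩⟩
      rcases lt_or_ge k (-S) with h₂ | h₂
      · exact ⟨-1, by simp, abs_le.2 ⟨by linarith, by linarith⟩⟩
      · exact ⟨0, by simp, abs_le.2 ⟨by linarith, by linarith⟩⟩
    simpa using (ih (fun i hi => hw i (by omega)) hkc).add_mul_last hc

theorem card_le_three_pow_of_forall_isSignedSum {m : ℕ} {w : ℕ → ℕ} {s : Finset ℤ}
    (hs : ∀ k ∈ s, IsSignedSum m w k) : #s ≤ 3 ^ m := by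
  classical
  let signs : Finset (Fin m → ℤ) := Fintype.piFinset fun _ => {-1, 0, 1}
  calc #s ≤ #(signs.image fun u => ∑ i : Fin m, u i * (w i : ℤ)) := by
        refine card_le_card fun k hk => ?_
        obtain ⟨u, hu, rfl⟩ := hs k hk
        refine mem_image.2 ⟨fun i => u i, Fintype.mem_piFinset.2 fun i => ?_, ?_⟩
        · rcases hu i with h | h | h <;> simp [h]
        · exact Fin.sum_univ_eq_sum_range (fun i => u i * (w i : ℤ)) m
    _ ≤ #signs := card_image_le
    _ = 3 ^ m := by simp [signs]

theorem IsWeighingSeq.two_mul_lt_three_pow {n m : ℕ} {w : ℕ → ℕ} (h : IsWeighingSeq n m w) :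
    2 * n < 3 ^ m := by
  have hsigned : ∀ k ∈ Icc (-(n : ℤ)) n, IsSignedSum m w k := by
    intro k hk
    obtain ⟨hlo, hhi⟩ := mem_Icc.1 hk
    rcases lt_trichotomy k 0 with hk₀ | rfl | hk₀
    · simpa using IsSignedSum.neg (h.2.2.2 (-k) (by omega) (by omega))
    · exact .zero m w
    · exact h.2.2.2 k hk₀ hhi
  have := card_le_three_pow_of_forall_isSignedSum hsigned
  rw [Int.card_Icc] at this
  omega

def IsCompleteSeq (n m : ℕ) (w : ℕ → ℕ) : Prop :=
  (∀ i < m, 0 < w i) ∧ (∀ i j, i ≤ j → j < m → w i ≤ w j) ∧ ∑ i ∈ range m, w i = n ∧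
    ∀ i < m, w i ≤ 2 * ∑ j ∈ range i, w j + 1

namespace IsCompleteSeq

variable {n m : ℕ} {w : ℕ → ℕ}

theorem isWeighingSeq (h : IsCompleteSeq n m w) : IsWeighingSeq n m w := by
  obtain ⟨hpos, hmono, hsum, hcompl⟩ := h
  refine ⟨hpos, hmono, hsum, fun k hk₁ hkn => isSignedSum_of_abs_le hcompl ?_⟩
  rw [abs_of_pos hk₁]
  exact_mod_cast hsum ▸ hkn

theorem zero (w : ℕ → ℕ) : IsCompleteSeq 0 0 w := by
  simp [IsCompleteSeq]

theorem update (h : IsCompleteSeq n m w) {x : ℕ} (hx : 0 < x) (hwx : ∀ i < m, w i ≤ x)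
    (hxn : x ≤ 2 * n + 1) : IsCompleteSeq (n + x) (m + 1) (Function.update w m x) := by
  obtain ⟨hpos, hmono, hsum, hcompl⟩ := h
  have hlt : ∀ i < m, Function.update w m x i = w i := fun i hi =>
    Function.update_of_ne hi.ne _ _
  have hsum_lt : ∀ i ≤ m, ∑ j ∈ range i, Function.update w m x j = ∑ j ∈ range i, w j :=
    fun i hi => sum_congr rfl fun j hj => hlt j (by simp at hj; omega)
  refine ⟨fun i hi => ?_, fun i j hij hj => ?_, ?_, fun i hi => ?_⟩
  · rcases Nat.lt_succ_iff_lt_or_eq.1 hi with hi | rfl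
    · rw [hlt i hi]; exact hpos i hi
    · simpa
  · rcases Nat.lt_succ_iff_lt_or_eq.1 hj with hj | rfl
    · rw [hlt i (by omega), hlt j hj]; exact hmono i j hij hj
    · rcases Nat.lt_or_ge i j with hi | hi
      · rw [hlt i hi, Function.update_self]; exact hwx i hi
      · rw [show i = j by omega]
  · rw [sum_range_succ, hsum_lt m le_rfl, hsum, Function.update_self]
  · rw [hsum_lt i (by omega)]
    rcases Nat.lt_succ_iff_lt_or_eq.1 hi with hi | rfl
    · rw [hlt i hi]; exact hcompl i hi
    · rwa [hsum, Function.update_self]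

end IsCompleteSeq

theorem clog_three_two_mul_succ (n : ℕ) :
    Nat.clog 3 (2 * (n + 1)) = Nat.clog 3 (2 * ((n + 2) / 3)) + 1 := by
  rw [Nat.clog_of_two_le (by norm_num) (by omega)]
  congr 1
  -- `(2 * n + 4) / 3` and `2 * ((n + 2) / 3)` differ only when they are `2 * q + 1` and `2 * q`,
  -- and no power of `3` lies between those since powers of `3` are odd.
  refine eq_of_forall_ge_iff fun y => ?_
  rw [Nat.clog_le_iff_le_pow (by norm_num), Nat.clog_le_iff_le_pow (by norm_num)]
  obtain ⟨t, ht⟩ : Odd (3 ^ y) := Odd.pow (by decide)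
  omega

-- The bound on the entries keeps the weights nondecreasing when the next weight is appended.
theorem exists_isCompleteSeq (n : ℕ) : ∃ w, IsCompleteSeq n (Nat.clog 3 (2 * n)) w ∧
    ∀ i < Nat.clog 3 (2 * n), w i ≤ n - (n + 1) / 3 := by
  induction n using Nat.strong_induction_on with
  | _ n ih =>
  cases n with
  | zero => exact ⟨0, .zero 0, by simp⟩
  | succ n =>
    obtain ⟨w, hw, hwle⟩ := ih ((n + 2) / 3) (by omega)
    rw [clog_three_two_mul_succ]
    set m := Nat.clog 3 (2 * ((n + 2) / 3))
    refine ⟨Function.update w m (n + 1 - (n + 2) / 3), ?_, fun i hi => ?_⟩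
    · have := hw.update (x := n + 1 - (n + 2) / 3) (by omega)
        (fun i hi => (hwle i hi).trans (by omega)) (by omega)
      rwa [show (n + 2) / 3 + (n + 1 - (n + 2) / 3) = n + 1 by omega] at this
    · rcases eq_or_ne i m with rfl | hne
      · simp
      · rw [Function.update_of_ne hne]
        exact (hwle i (by omega)).trans (by omega)

theorem min_length_eq_ceil_logb_general (n : ℕ) :
    ((sInf {m : ℕ | ∃ w : ℕ → ℕ, IsWeighingSeq n m w} : ℕ) : ℤ) =
      ⌈Real.logb 3 (2 * (n : ℝ))⌉ := by
  have hleast : IsLeast {m : ℕ | ∃ w : ℕ → ℕ, IsWeighingSeq n m w} (Nat.clog 3 (2 * n)) := by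
    refine ⟨?_, fun m ⟨w, hw⟩ => Nat.clog_le_of_le_pow hw.two_mul_lt_three_pow.le⟩
    obtain ⟨w, hw, -⟩ := exists_isCompleteSeq n
    exact ⟨w, hw.isWeighingSeq⟩
  have hceil := Real.ceil_logb_natCast (b := 3) (r := ((2 * n : ℕ) : ℝ)) (Nat.cast_nonneg _)
  rw [Int.clog_natCast] at hceil
  push_cast at hceil
  rw [hleast.csInf_eq, hceil]

/-- For every positive integer `n`, the minimal number of parts of a weighing
sequence for `n` equals `⌈log₃ (2n)⌉`. -/
theorem min_length_eq_ceil_logb (n : ℕ) (hn : 0 < n) :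
    ((sInf {m : ℕ | ∃ w : ℕ → ℕ, IsWeighingSeq n m w} : ℕ) : ℤ) =
      ⌈Real.logb 3 (2 * (n : ℝ))⌉ :=
  min_length_eq_ceil_logb_general n
end
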